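/- arXiv:1607.01729 — 5 statements merged into one kernel-verified Lean document; each statement's English description precedes it below -/
import Mathlib

section
/- Let L be a finite set (of landmarks), A a type (of actions) with a cost function cost : A → ℝ≥0, and for each φ ∈ L a set of achievers ach(φ) ⊆ A. Let (x, c) be a cost partition for (L, ach, cost). If π is a finite list of elements of A such that for every φ ∈ L at least one member of π belongs to ach(φ), then Σ_{φ∈L} c(φ) ≤ Σ_{a in π} cost(a), where the right-hand sum is over the entries of the list π counted with multiplicity. -/
/-! Bound each `c φ` by the sum of `x a φ` over the achievers `a` of `φ` occurring in the plan,
then exchange the two sums: each distinct action `a` of the plan contributes at most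
`∑_{φ : a ∈ ach φ} x a φ ≤ cost a`. -/

open scoped Classical

theorem List.sum_toFinset_le_sum_map {ι M : Type*} [AddCommMonoid M] [PartialOrder M]
    [CanonicallyOrderedAdd M] [DecidableEq ι] (f : ι → M) (l : List ι) :
    ∑ i ∈ l.toFinset, f i ≤ (l.map f).sum := by
  rw [Finset.sum, List.toFinset_val, Multiset.map_coe, Multiset.sum_coe]
  exact ((List.dedup_sublist l).map f).sum_le_sum fun _ _ => zero_le

theorem sum_costPartition_le_sum_cost {A Λ M : Type*} [AddCommMonoid M] [PartialOrder M]
    [IsOrderedAddMonoid M] [CanonicallyOrderedAdd M] (L : Finset Λ) (cost : A → M)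
    (ach : Λ → Set A) (x : A → Λ → M) (c : Λ → M)
    (hx : ∀ a : A, ∑ φ ∈ L.filter (fun φ => a ∈ ach φ), x a φ ≤ cost a)
    (hc : ∀ φ ∈ L, ∀ a ∈ ach φ, c φ ≤ x a φ)
    (S : Finset A) (hS : ∀ φ ∈ L, ∃ a ∈ S, a ∈ ach φ) :
    ∑ φ ∈ L, c φ ≤ ∑ a ∈ S, cost a := by
  have hc_le_achievers (φ) (hφ : φ ∈ L) :
      c φ ≤ ∑ a ∈ S.filter (fun a => a ∈ ach φ), x a φ := by
    obtain ⟨a, haS, ha⟩ := hS φ hφ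
    exact (hc φ hφ a ha).trans <|
      Finset.single_le_sum (f := (x · φ)) (fun _ _ => zero_le)
        (Finset.mem_filter.mpr ⟨haS, ha⟩)
  calc ∑ φ ∈ L, c φ
      ≤ ∑ φ ∈ L, ∑ a ∈ S.filter (fun a => a ∈ ach φ), x a φ :=
        Finset.sum_le_sum hc_le_achievers
    _ = ∑ a ∈ S, ∑ φ ∈ L.filter (fun φ => a ∈ ach φ), x a φ :=
        Finset.sum_comm' fun φ a => by simp only [Finset.mem_filter]; tauto
    _ ≤ ∑ a ∈ S, cost a := Finset.sum_le_sum fun a _ => hx a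

/-- If `(x, c)` is a cost partition for `(L, ach, cost)` and every landmark in `L` has an
achiever among the entries of the plan `π`, then `Σ_{φ∈L} c φ` is at most the total cost
of `π` (entries counted with multiplicity). -/
theorem sum_costPartition_le_planCost {A : Type*} {Λ : Type*} (L : Finset Λ)
    (cost : A → NNReal) (ach : Λ → Set A) (x : A → Λ → NNReal) (c : Λ → NNReal)
    (hx : ∀ a : A, ∑ φ ∈ L.filter (fun φ => a ∈ ach φ), x a φ ≤ cost a)
    (hc : ∀ φ ∈ L, ∀ a ∈ ach φ, c φ ≤ x a φ)
    (π : List A) (hach : ∀ φ ∈ L, ∃ a ∈ π, a ∈ ach φ) :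
    ∑ φ ∈ L, c φ ≤ (π.map cost).sum :=
  (sum_costPartition_le_sum_cost L cost ach x c hx hc π.toFinset
    fun φ hφ => by simpa using hach φ hφ).trans (π.sum_toFinset_le_sum_map cost)
end

section
/- Let gn = (T, ≺, goal) be a goal network, t ∈ T a node, and φ ∈ F a fact. If φ is a landmark of the classical planning problem (s₀, g_t), then φ is a landmark of the relaxed HGN planning problem (s₀, gn): every plan solving (s₀, gn) has φ in some intermediate state. -/
open scoped Classical

/-- An action: precondition, add effects, delete effects, and a nonnegative cost. -/
structure PAction (F : Type*) where
  pre : Set F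
  add : Set F
  del : Set F
  cost : NNReal

variable {F : Type*}

/-- The state resulting from applying action `a` in state `s`: `(s \ del a) ∪ add a`. -/
def applyAction (s : Set F) (a : PAction F) : Set F := (s \ a.del) ∪ a.add

/-- A plan is executable from `s` if each action's precondition holds in the state
produced by the previous actions. -/
def Exec : Set F → List (PAction F) → Prop
  | _, [] => True
  | s, a :: rest => a.pre ⊆ s ∧ Exec (applyAction s a) rest

/-- The state obtained by running a plan from `s`. -/
def runPlan : Set F → List (PAction F) → Set F
  | s, [] => s
  | s, a :: rest => runPlan (applyAction s a) rest

/-- The `i`-th intermediate state `σᵢ` of a plan `π` started in `s`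
(the result of executing the first `i` actions). -/
def stateAt (s : Set F) (π : List (PAction F)) (i : ℕ) : Set F := runPlan s (π.take i)

/-- The cost of a plan: the sum of the costs of its actions (with multiplicity). -/
def planCost (π : List (PAction F)) : NNReal := (π.map PAction.cost).sum

/-- A plan solves the classical planning problem `(s₀, g)` (with `g` a set of states)
if it is executable from `s₀` and its final state lies in `g`. -/
def Solves (s₀ : Set F) (g : Set (Set F)) (π : List (PAction F)) : Prop :=
  Exec s₀ π ∧ stateAt s₀ π π.length ∈ g

/-- A fact `φ` is a landmark of the problem `(s₀, g)` if every solution plan has `φ`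
in some intermediate state. -/
def IsLandmark (s₀ : Set F) (g : Set (Set F)) (φ : F) : Prop :=
  ∀ π, Solves s₀ g π → ∃ i ≤ π.length, φ ∈ stateAt s₀ π i

/-- A goal network: a finite set `T` of nodes, an order relation `prec` on the nodes,
and a goal (a set of states) attached to each node. -/
structure GoalNetwork (F : Type*) (ν : Type*) where
  T : Finset ν
  prec : ν → ν → Prop
  goal : ν → Set (Set F)

variable {ν : Type*}

/-- `prec` is a strict partial order on the nodes of the network. -/
def GoalNetwork.IsStrictOrder (gn : GoalNetwork F ν) : Prop :=
  (∀ t ∈ gn.T, ¬ gn.prec t t) ∧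
    (∀ t ∈ gn.T, ∀ u ∈ gn.T, ∀ v ∈ gn.T, gn.prec t u → gn.prec u v → gn.prec t v)

/-- A node is unconstrained if it has no `≺`-predecessor in the network. -/
def Unconstrained (gn : GoalNetwork F ν) (t : ν) : Prop := ∀ u ∈ gn.T, ¬ gn.prec u t

/-- A plan `π` solves the relaxed HGN planning problem `(s₀, gn)` if it is executable from
`s₀` and there is `τ : T → {0,…,n}` with `σ_{τ t} ∈ goal t` for all `t ∈ T` and
`τ t ≤ τ u` whenever `t ≺ u`. -/
def SolvesRelaxed (s₀ : Set F) (gn : GoalNetwork F ν) (π : List (PAction F)) : Prop :=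
  Exec s₀ π ∧ ∃ τ : ν → ℕ,
    (∀ t ∈ gn.T, τ t ≤ π.length ∧ stateAt s₀ π (τ t) ∈ gn.goal t) ∧
    (∀ t ∈ gn.T, ∀ u ∈ gn.T, gn.prec t u → τ t ≤ τ u)

/-- A fact `φ` is a landmark of the relaxed HGN problem `(s₀, gn)` if every plan solving it
has `φ` in some intermediate state. -/
def IsRelaxedLandmark (s₀ : Set F) (gn : GoalNetwork F ν) (φ : F) : Prop :=
  ∀ π, SolvesRelaxed s₀ gn π → ∃ i ≤ π.length, φ ∈ stateAt s₀ π i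

/-! The prefix of a relaxed solution up to the time `τ t` at which node `t` is achieved solves the
classical problem `(s₀, goal t)`, so the landmark occurs within that prefix. -/

theorem Exec.take {s : Set F} : ∀ {π : List (PAction F)} (k : ℕ), Exec s π → Exec s (π.take k)
  | [], _, _ => by simp [Exec]
  | _ :: _, 0, _ => trivial
  | _ :: _, k + 1, h => ⟨h.1, Exec.take k h.2⟩

theorem stateAt_take_of_le (s : Set F) (π : List (PAction F)) {i k : ℕ} (h : i ≤ k) :
    stateAt s (π.take k) i = stateAt s π i := by
  simp [stateAt, List.take_take, Nat.min_eq_left h]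

theorem solves_take {s₀ : Set F} {g : Set (Set F)} {π : List (PAction F)} {k : ℕ}
    (hexec : Exec s₀ π) (hk : k ≤ π.length) (hg : stateAt s₀ π k ∈ g) :
    Solves s₀ g (π.take k) := by
  refine ⟨hexec.take k, ?_⟩
  rwa [List.length_take_of_le hk, stateAt_take_of_le s₀ π le_rfl]

theorem IsLandmark.exists_le_of_stateAt_mem {s₀ : Set F} {g : Set (Set F)} {φ : F}
    (hφ : IsLandmark s₀ g φ) {π : List (PAction F)} {k : ℕ}
    (hexec : Exec s₀ π) (hk : k ≤ π.length) (hg : stateAt s₀ π k ∈ g) :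
    ∃ i ≤ k, φ ∈ stateAt s₀ π i := by
  obtain ⟨i, hi, hφi⟩ := hφ _ (solves_take hexec hk hg)
  rw [List.length_take_of_le hk] at hi
  exact ⟨i, hi, by rwa [stateAt_take_of_le s₀ π hi] at hφi⟩

theorem relaxedLandmark_of_landmark_of_node_general (s₀ : Set F) (gn : GoalNetwork F ν)
    (t : ν) (ht : t ∈ gn.T) (φ : F)
    (hφ : IsLandmark s₀ (gn.goal t) φ) :
    IsRelaxedLandmark s₀ gn φ := by
  rintro π ⟨hexec, τ, hτ, -⟩
  obtain ⟨hk, hg⟩ := hτ t ht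
  obtain ⟨i, hi, hφi⟩ := hφ.exists_le_of_stateAt_mem hexec hk hg
  exact ⟨i, hi.trans hk, hφi⟩

/-- A landmark of the classical planning problem `(s₀, goal t)` for a node `t` of `gn`
is also a landmark of the relaxed HGN planning problem `(s₀, gn)`. -/
theorem relaxedLandmark_of_landmark_of_node (s₀ : Set F) (gn : GoalNetwork F ν)
    (hstrict : gn.IsStrictOrder) (t : ν) (ht : t ∈ gn.T) (φ : F)
    (hφ : IsLandmark s₀ (gn.goal t) φ) :
    IsRelaxedLandmark s₀ gn φ :=
  relaxedLandmark_of_landmark_of_node_general s₀ gn t ht φ hφ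
end

section
/- Let gn = (T, ≺, goal) be a goal network, t ∈ T an unconstrained node, and m an HGN method with last node t_g. Then every plan solving the relaxed HGN planning problem (s₀, gn ∘_t m) also solves the relaxed HGN planning problem (s₀, gn). -/
open scoped Classical

variable {F : Type*}

variable {ν : Type*}

/-- An HGN method: a precondition and a goal network with a distinguished 'last' node `tg`
that is maximal in the network's order. -/
structure Method (F : Type*) (ν : Type*) where
  precond : Set F
  network : GoalNetwork F ν
  tg : ν
  tg_mem : tg ∈ network.T
  tg_max : ∀ u ∈ network.T, ¬ network.prec tg u

/-- Method application `gn ∘ₜ m` (for node sets taken disjoint): the node set is the union of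
the two node sets, the order contains both orders together with `tg ≺ t`, and goals are
inherited (from `network m` on its nodes, from `gn` elsewhere). -/
noncomputable def GoalNetwork.applyMethod (gn : GoalNetwork F ν) (t : ν) (m : Method F ν) :
    GoalNetwork F ν where
  T := gn.T ∪ m.network.T
  prec := fun a b => gn.prec a b ∨ m.network.prec a b ∨ (a = m.tg ∧ b = t)
  goal := fun a => if a ∈ m.network.T then m.network.goal a else gn.goal a

/-- Goal release `gn − t`: remove node `t` and all orderings involving it. -/
noncomputable def GoalNetwork.release (gn : GoalNetwork F ν) (t : ν) : GoalNetwork F ν where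
  T := gn.T.erase t
  prec := fun a b => gn.prec a b ∧ a ≠ t ∧ b ≠ t
  goal := gn.goal

/-- The HGN solution set `S(s₀, gn)` (Definition of solutions to HGN planning problems),
relative to relevance relations `relA` (actions) and `relM` (methods). -/
inductive HGNSol (relA : PAction F → Set (Set F) → Prop)
    (relM : Method F ν → Set (Set F) → Prop) :
    Set F → GoalNetwork F ν → List (PAction F) → Prop
  | base (s : Set F) (gn : GoalNetwork F ν) : gn.T = ∅ → HGNSol relA relM s gn []
  | satisfied (s : Set F) (gn : GoalNetwork F ν) (t : ν) (π : List (PAction F)) :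
      t ∈ gn.T → Unconstrained gn t → s ∈ gn.goal t →
      HGNSol relA relM s (gn.release t) π → HGNSol relA relM s gn π
  | action (s : Set F) (gn : GoalNetwork F ν) (t : ν) (a : PAction F) (π : List (PAction F)) :
      t ∈ gn.T → Unconstrained gn t → a.pre ⊆ s → relA a (gn.goal t) →
      HGNSol relA relM (applyAction s a) gn π → HGNSol relA relM s gn (a :: π)
  | method (s : Set F) (gn : GoalNetwork F ν) (t : ν) (m : Method F ν) (π : List (PAction F)) :
      t ∈ gn.T → Unconstrained gn t → m.precond ⊆ s → relM m (gn.goal t) →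
      Disjoint gn.T m.network.T →
      HGNSol relA relM s (gn.applyMethod t m) π → HGNSol relA relM s gn π

theorem SolvesRelaxed.of_subnetwork {s₀ : Set F} {gn gn' : GoalNetwork F ν} {π : List (PAction F)}
    (hT : gn.T ⊆ gn'.T) (hprec : ∀ a ∈ gn.T, ∀ b ∈ gn.T, gn.prec a b → gn'.prec a b)
    (hgoal : ∀ a ∈ gn.T, gn'.goal a ⊆ gn.goal a) (h : SolvesRelaxed s₀ gn' π) :
    SolvesRelaxed s₀ gn π := by
  obtain ⟨hexec, τ, hτgoal, hτorder⟩ := h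
  refine ⟨hexec, τ, fun a ha => ?_, fun a ha b hb hab => ?_⟩
  · obtain ⟨hle, hmem⟩ := hτgoal a (hT ha)
    exact ⟨hle, hgoal a ha hmem⟩
  · exact hτorder a (hT ha) b (hT hb) (hprec a ha b hb hab)

namespace GoalNetwork

variable (gn : GoalNetwork F ν) (t : ν) (m : Method F ν)

theorem T_subset_applyMethod : gn.T ⊆ (gn.applyMethod t m).T :=
  Finset.subset_union_left

theorem applyMethod_prec_of_prec {a b : ν} (h : gn.prec a b) : (gn.applyMethod t m).prec a b :=
  Or.inl h

theorem applyMethod_goal_of_notMem {a : ν} (ha : a ∉ m.network.T) :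
    (gn.applyMethod t m).goal a = gn.goal a :=
  if_neg ha

end GoalNetwork

theorem solvesRelaxed_of_applyMethod_general (s₀ : Set F) (gn : GoalNetwork F ν)
    (t : ν)
    (m : Method F ν) (hdisj : Disjoint gn.T m.network.T)
    (π : List (PAction F)) (hπ : SolvesRelaxed s₀ (gn.applyMethod t m) π) :
    SolvesRelaxed s₀ gn π :=
  hπ.of_subnetwork (gn.T_subset_applyMethod t m)
    (fun _ _ _ _ => gn.applyMethod_prec_of_prec t m)
    (fun _ ha => (gn.applyMethod_goal_of_notMem t m (Finset.disjoint_left.mp hdisj ha)).le)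

/-- Every plan solving the relaxed HGN planning problem after a method application
`(s₀, gn ∘ₜ m)` also solves the relaxed HGN planning problem `(s₀, gn)`. -/
theorem solvesRelaxed_of_applyMethod (s₀ : Set F) (gn : GoalNetwork F ν)
    (hstrict : gn.IsStrictOrder) (t : ν) (ht : t ∈ gn.T) (hunc : Unconstrained gn t)
    (m : Method F ν) (hdisj : Disjoint gn.T m.network.T)
    (π : List (PAction F)) (hπ : SolvesRelaxed s₀ (gn.applyMethod t m) π) :
    SolvesRelaxed s₀ gn π :=
  solvesRelaxed_of_applyMethod_general s₀ gn t m hdisj π hπ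
end

section
/- For every relevance relation rel, every plan π in the HGN solution set S(s₀, gn₀) solves the relaxed HGN planning problem (s₀, gn₀); i.e., π is executable from s₀ and achieves the goals of gn₀ in an order consistent with its constraints. (Every solution of an HGN planning problem is a solution of its relaxation.) -/
open scoped Classical

variable {F : Type*}

variable {ν : Type*}

/-!
Induction on the derivation of `π ∈ S(s₀, gn₀)`, carrying the time stamps `τ` along. An action
step shifts every time stamp by one. Releasing a goal satisfied in the current state stamps it
with `0`, which respects the order because the released node has no predecessor. Method
application only adds nodes and orderings, so a witness for `gn ∘ₜ m` restricts to one for `gn`.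
-/

section Relaxed

variable {s : Set F} {gn : GoalNetwork F ν} {π : List (PAction F)}

@[simp]
theorem stateAt_zero (s : Set F) (π : List (PAction F)) : stateAt s π 0 = s := rfl

@[simp]
theorem stateAt_cons_succ (s : Set F) (a : PAction F) (π : List (PAction F)) (i : ℕ) :
    stateAt s (a :: π) (i + 1) = stateAt (applyAction s a) π i := rfl

theorem solvesRelaxed_nil (hT : gn.T = ∅) : SolvesRelaxed s gn [] :=
  ⟨trivial, fun _ => 0, by simp [hT], by simp [hT]⟩

theorem SolvesRelaxed.cons {a : PAction F} (hpre : a.pre ⊆ s)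
    (h : SolvesRelaxed (applyAction s a) gn π) : SolvesRelaxed s gn (a :: π) := by
  obtain ⟨hexec, τ, hgoal, hord⟩ := h
  refine ⟨⟨hpre, hexec⟩, fun u => τ u + 1, fun u hu => ?_, fun u hu v hv huv => ?_⟩
  · obtain ⟨hle, hmem⟩ := hgoal u hu
    exact ⟨by simpa using hle, by simpa using hmem⟩
  · simpa using hord u hu v hv huv

theorem SolvesRelaxed.of_release {t : ν} (hunc : Unconstrained gn t) (hs : s ∈ gn.goal t)
    (h : SolvesRelaxed s (gn.release t) π) : SolvesRelaxed s gn π := by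
  obtain ⟨hexec, τ, hgoal, hord⟩ := h
  refine ⟨hexec, Function.update τ t 0, fun u hu => ?_, fun u hu v hv huv => ?_⟩
  · by_cases hut : u = t
    · subst hut
      simpa using hs
    · simpa [hut, GoalNetwork.release] using hgoal u (Finset.mem_erase.mpr ⟨hut, hu⟩)
  · by_cases hut : u = t
    · simp [hut]
    · have hvt : v ≠ t := by
        rintro rfl
        exact hunc u hu huv
      have hu' : u ∈ (gn.release t).T := Finset.mem_erase.mpr ⟨hut, hu⟩
      have hv' : v ∈ (gn.release t).T := Finset.mem_erase.mpr ⟨hvt, hv⟩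
      simpa [hut, hvt] using hord u hu' v hv' ⟨huv, hut, hvt⟩

theorem SolvesRelaxed.mono {gn' : GoalNetwork F ν} (hT : gn.T ⊆ gn'.T)
    (hgoal : ∀ t ∈ gn.T, gn'.goal t = gn.goal t)
    (hprec : ∀ t ∈ gn.T, ∀ u ∈ gn.T, gn.prec t u → gn'.prec t u)
    (h : SolvesRelaxed s gn' π) : SolvesRelaxed s gn π := by
  obtain ⟨hexec, τ, hgoal', hord⟩ := h
  refine ⟨hexec, τ, fun t ht => ?_, fun t ht u hu htu => ?_⟩
  · rw [← hgoal t ht]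
    exact hgoal' t (hT ht)
  · exact hord t (hT ht) u (hT hu) (hprec t ht u hu htu)

theorem SolvesRelaxed.of_applyMethod {t : ν} {m : Method F ν} (hdisj : Disjoint gn.T m.network.T)
    (h : SolvesRelaxed s (gn.applyMethod t m) π) : SolvesRelaxed s gn π :=
  h.mono Finset.subset_union_left
    (fun _ hu => if_neg (Finset.disjoint_left.mp hdisj hu))
    (fun _ _ _ _ huv => Or.inl huv)

end Relaxed

theorem solvesRelaxed_of_hgnSol_general (relA : PAction F → Set (Set F) → Prop)
    (relM : Method F ν → Set (Set F) → Prop) (s₀ : Set F) (gn₀ : GoalNetwork F ν)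
    (π : List (PAction F)) (hπ : HGNSol relA relM s₀ gn₀ π) :
    SolvesRelaxed s₀ gn₀ π := by
  induction hπ with
  | base _ _ hT => exact solvesRelaxed_nil hT
  | satisfied _ _ _ _ _ hunc hs _ ih => exact ih.of_release hunc hs
  | action _ _ _ _ _ _ _ hpre _ _ ih => exact ih.cons hpre
  | method _ _ _ _ _ _ _ _ _ hdisj _ ih => exact ih.of_applyMethod hdisj

/-- Every solution of the HGN planning problem `(s₀, gn₀)` (for any relevance relations)
solves its relaxation: it is executable from `s₀` and achieves the goals of `gn₀` in an
order consistent with its constraints. -/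
theorem solvesRelaxed_of_hgnSol (relA : PAction F → Set (Set F) → Prop)
    (relM : Method F ν → Set (Set F) → Prop) (s₀ : Set F) (gn₀ : GoalNetwork F ν)
    (hstrict : gn₀.IsStrictOrder)
    (π : List (PAction F)) (hπ : HGNSol relA relM s₀ gn₀ π) :
    SolvesRelaxed s₀ gn₀ π :=
  solvesRelaxed_of_hgnSol_general relA relM s₀ gn₀ π hπ
end

section
/- Let L be a finite set of facts such that every φ ∈ L is a landmark of the relaxed HGN planning problem (s₀, gn₀) and φ ∉ s₀, and set ach(φ) = {a : φ ∈ add(a)}. Then for every cost partition (x, c) for (L, ach, cost) and every plan π solving the relaxed HGN planning problem (s₀, gn₀), Σ_{φ∈L} c(φ) ≤ cost(π). -/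
open scoped Classical

variable {F : Type*}

variable {ν : Type*}

/-! Every landmark in `L` is absent from `s₀` but reached by `π`, so some action `a` of `π`
adds it. Charging `c φ` to such an achiever gives `c φ ≤ x a φ`, and the charges on one
action sum to at most its cost; summing over the actions of `π` gives the bound. -/

theorem Finset.sum_le_sum_map_sum_filter_of_forall_exists_mem {α M : Type*}
    [AddCommMonoid M] [PartialOrder M] [CanonicallyOrderedAdd M] [IsOrderedAddMonoid M]
    (f : α → M) (s : Finset α) (l : List (Set α)) (hcover : ∀ x ∈ s, ∃ t ∈ l, x ∈ t) :
    ∑ x ∈ s, f x ≤ (l.map fun t => ∑ x ∈ s.filter (· ∈ t), f x).sum := by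
  induction l generalizing s with
  | nil =>
    obtain rfl : s = ∅ := Finset.eq_empty_of_forall_notMem fun x hx => by
      simpa using hcover x hx
    simp
  | cons t l ih =>
    have hrest : ∀ x ∈ s.filter (· ∉ t), ∃ u ∈ l, x ∈ u := fun x hx => by
      obtain ⟨hxs, hxt⟩ := Finset.mem_filter.mp hx
      simpa [hxt] using hcover x hxs
    rw [← Finset.sum_filter_add_sum_filter_not s (· ∈ t), List.map_cons, List.sum_cons]
    gcongr
    refine (ih _ hrest).trans (List.sum_le_sum fun u _ => ?_)
    exact Finset.sum_le_sum_of_subset (Finset.filter_subset_filter _ (Finset.filter_subset _ _))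

theorem exists_mem_add_of_mem_runPlan {s : Set F} {π : List (PAction F)} {φ : F}
    (h : φ ∈ runPlan s π) : φ ∈ s ∨ ∃ a ∈ π, φ ∈ a.add := by
  induction π generalizing s with
  | nil => exact Or.inl h
  | cons a rest ih =>
    rcases ih h with hsa | ⟨b, hb, hφ⟩
    · rcases hsa with ⟨hs, -⟩ | hadd
      · exact Or.inl hs
      · exact Or.inr ⟨a, List.mem_cons_self, hadd⟩
    · exact Or.inr ⟨b, List.mem_cons_of_mem _ hb, hφ⟩

theorem IsRelaxedLandmark.exists_mem_add {s₀ : Set F} {gn : GoalNetwork F ν} {φ : F}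
    (hφ : IsRelaxedLandmark s₀ gn φ) (hφs₀ : φ ∉ s₀) {π : List (PAction F)}
    (hπ : SolvesRelaxed s₀ gn π) : ∃ a ∈ π, φ ∈ a.add := by
  obtain ⟨i, -, hi⟩ := hφ π hπ
  obtain ⟨a, ha, hφa⟩ := (exists_mem_add_of_mem_runPlan hi).resolve_left hφs₀
  exact ⟨a, List.mem_of_mem_take ha, hφa⟩

theorem sum_costPartition_le_cost_of_solvesRelaxed_general (s₀ : Set F) (gn₀ : GoalNetwork F ν)
    (L : Finset F)
    (hL : ∀ φ ∈ L, IsRelaxedLandmark s₀ gn₀ φ ∧ φ ∉ s₀)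
    (x : PAction F → F → NNReal) (c : F → NNReal)
    (hx : ∀ a : PAction F, ∑ φ ∈ L.filter (fun φ => φ ∈ a.add), x a φ ≤ a.cost)
    (hc : ∀ φ ∈ L, ∀ a : PAction F, φ ∈ a.add → c φ ≤ x a φ)
    (π : List (PAction F)) (hπ : SolvesRelaxed s₀ gn₀ π) :
    ∑ φ ∈ L, c φ ≤ planCost π := by
  have hcover : ∀ φ ∈ L, ∃ t ∈ π.map PAction.add, φ ∈ t := fun φ hφ => by
    obtain ⟨a, ha, hφa⟩ := (hL φ hφ).1.exists_mem_add (hL φ hφ).2 hπ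
    exact ⟨a.add, List.mem_map_of_mem ha, hφa⟩
  calc ∑ φ ∈ L, c φ
      ≤ ((π.map PAction.add).map fun t => ∑ φ ∈ L.filter (· ∈ t), c φ).sum :=
        L.sum_le_sum_map_sum_filter_of_forall_exists_mem c _ hcover
    _ ≤ planCost π := by
        rw [List.map_map, planCost]
        refine List.sum_le_sum fun a _ => (Finset.sum_le_sum fun φ hφ => ?_).trans (hx a)
        obtain ⟨hφL, hφa⟩ := Finset.mem_filter.mp hφ
        exact hc φ hφL a hφa

/-- Landmark cost-partition lower bound for relaxed HGN planning: if every `φ ∈ L` is a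
landmark of the relaxed HGN problem `(s₀, gn₀)` not holding initially,
`ach φ = {a | φ ∈ add a}`, and `(x, c)` is a cost partition, then `Σ_{φ∈L} c φ` is at most
the cost of every plan solving the relaxed HGN problem. -/
theorem sum_costPartition_le_cost_of_solvesRelaxed (s₀ : Set F) (gn₀ : GoalNetwork F ν)
    (hstrict : gn₀.IsStrictOrder) (L : Finset F)
    (hL : ∀ φ ∈ L, IsRelaxedLandmark s₀ gn₀ φ ∧ φ ∉ s₀)
    (x : PAction F → F → NNReal) (c : F → NNReal)
    (hx : ∀ a : PAction F, ∑ φ ∈ L.filter (fun φ => φ ∈ a.add), x a φ ≤ a.cost)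
    (hc : ∀ φ ∈ L, ∀ a : PAction F, φ ∈ a.add → c φ ≤ x a φ)
    (π : List (PAction F)) (hπ : SolvesRelaxed s₀ gn₀ π) :
    ∑ φ ∈ L, c φ ≤ planCost π :=
  sum_costPartition_le_cost_of_solvesRelaxed_general s₀ gn₀ L hL x c hx hc π hπ
end
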